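/- Let f, g : ℝ^{2n} → ℂ be smooth functions. Then Σ_{i,j=1}^{2n} (∂f/∂Z_i)(0) · (∂g/∂Z_j)(0) · ∫_{ℂ^n} ∫_{ℂ^n} 𝒫(0, w) · W_i · 𝒫(w, w') · W'_j · 𝒫(w', 0) dW dW' = (1/π) Σ_{k=1}^n (∂f/∂z̄_k)(0) · (∂g/∂z_k)(0), where W_i and W'_j denote the i-th and j-th real coordinates of w and w' respectively under the identification ℂ^n ≅ ℝ^{2n}. -/

import Mathlib

open MeasureTheory Complex

noncomputable section

/-- The Wirtinger derivative `∂/∂z_j` of a function on `ℂⁿ ≅ ℝ^{2n}`. -/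
def wirtingerD {n : ℕ} (j : Fin n) (f : (Fin n → ℂ) → ℂ) (z : Fin n → ℂ) : ℂ :=
  (1 / 2) * (fderiv ℝ f z (Pi.single j 1) - Complex.I * fderiv ℝ f z (Pi.single j Complex.I))

/-- The Wirtinger derivative `∂/∂z̄_j` of a function on `ℂⁿ ≅ ℝ^{2n}`. -/
def wirtingerDBar {n : ℕ} (j : Fin n) (f : (Fin n → ℂ) → ℂ) (z : Fin n → ℂ) : ℂ :=
  (1 / 2) * (fderiv ℝ f z (Pi.single j 1) + Complex.I * fderiv ℝ f z (Pi.single j Complex.I))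

/-- The creation operator `b_j = -2 ∂/∂z_j + π z̄_j`. -/
def bOp {n : ℕ} (j : Fin n) (f : (Fin n → ℂ) → ℂ) : (Fin n → ℂ) → ℂ :=
  fun z => -2 * wirtingerD j f z + (Real.pi : ℂ) * (starRingEnd ℂ) (z j) * f z

/-- The annihilation operator `b_j⁺ = 2 ∂/∂z̄_j + π z_j`. -/
def bPlusOp {n : ℕ} (j : Fin n) (f : (Fin n → ℂ) → ℂ) : (Fin n → ℂ) → ℂ :=
  fun z => 2 * wirtingerDBar j f z + (Real.pi : ℂ) * z j * f z

/-- The Gaussian `exp(-(π/2) Σ |z_i|²)`. -/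
def gaussFn {n : ℕ} (z : Fin n → ℂ) : ℂ :=
  Complex.exp (-((Real.pi : ℂ) / 2) * ∑ i, (Complex.normSq (z i) : ℂ))

/-- The iterated operator `b^α = b_1^{α_1} ∘ ⋯ ∘ b_n^{α_n}`. -/
def bPow {n : ℕ} (α : Fin n → ℕ) (f : (Fin n → ℂ) → ℂ) : (Fin n → ℂ) → ℂ :=
  (List.ofFn (fun j : Fin n => (bOp j)^[α j])).foldr (· ∘ ·) id f

/-- The eigenfunctions `f_{α,β} = b^α (z^β exp(-(π/2) Σ |z_i|²))` of the model operator. -/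
def eigFun {n : ℕ} (α β : Fin n → ℕ) : (Fin n → ℂ) → ℂ :=
  bPow α (fun z => (∏ j, z j ^ β j) * gaussFn z)

/-- The model Bergman kernel `𝒫(z,w) = exp(-(π/2) Σ (|z_j|² + |w_j|² - 2 z_j w̄_j))`. -/
def bergK {n : ℕ} (z w : Fin n → ℂ) : ℂ :=
  Complex.exp (-((Real.pi : ℂ) / 2) *
    ∑ j, ((Complex.normSq (z j) : ℂ) + (Complex.normSq (w j) : ℂ)
            - 2 * z j * (starRingEnd ℂ) (w j)))

/-- `F : ℂⁿ × ℂⁿ → ℂ` is a polynomial function in the underlying real coordinates, equivalently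
a polynomial in the coordinates `z_i, z̄_i` of the first argument and `z'_i, z̄'_i` of the
second one. -/
def IsPolyKernel {n : ℕ} (F : (Fin n → ℂ) → (Fin n → ℂ) → ℂ) : Prop :=
  ∃ p : MvPolynomial (Fin n ⊕ Fin n ⊕ Fin n ⊕ Fin n) ℂ,
    ∀ z z' : Fin n → ℂ,
      F z z' = MvPolynomial.eval
        (Sum.elim (fun i => z i) (Sum.elim (fun i => (starRingEnd ℂ) (z i))
          (Sum.elim (fun i => z' i) (fun i => (starRingEnd ℂ) (z' i))))) p

/-- Under the identification `ℝ^{2n} ≅ ℂⁿ`, `z_j = Z_{2j-1} + i Z_{2j}`, the direction in `ℂⁿ`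
corresponding to the `j`-th real coordinate `Z_j`. -/
def coordDir {n : ℕ} (j : Fin (2 * n)) : Fin n → ℂ :=
  Pi.single ⟨j.val / 2, by have := j.isLt; omega⟩ (if j.val % 2 = 0 then 1 else Complex.I)

/-- The `j`-th real coordinate of `w ∈ ℂⁿ ≅ ℝ^{2n}`, viewed as a complex number. -/
def realCoordC {n : ℕ} (j : Fin (2 * n)) (w : Fin n → ℂ) : ℂ :=
  if j.val % 2 = 0 then ((w ⟨j.val / 2, by have := j.isLt; omega⟩).re : ℂ)
  else ((w ⟨j.val / 2, by have := j.isLt; omega⟩).im : ℂ)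

/-- The partial derivative `∂/∂Z_j` in the `j`-th real coordinate of `ℂⁿ ≅ ℝ^{2n}`. -/
def realPDeriv {n : ℕ} (j : Fin (2 * n)) (f : (Fin n → ℂ) → ℂ) (z : Fin n → ℂ) : ℂ :=
  fderiv ℝ f z (coordDir j)

/-- The iterated partial derivative `∂^α` in the real coordinates of `ℂⁿ ≅ ℝ^{2n}`,
for a multi-index `α ∈ ℕ^{2n}`. -/
def iterD {n : ℕ} (α : Fin (2 * n) → ℕ) (f : (Fin n → ℂ) → ℂ) : (Fin n → ℂ) → ℂ :=
  (List.ofFn (fun j : Fin (2 * n) =>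
    (fun (g : (Fin n → ℂ) → ℂ) (z : Fin n → ℂ) => fderiv ℝ g z (coordDir j))^[α j])).foldr
    (· ∘ ·) id f


open Real Filter

lemma norm_pow_cexp (k : ℕ) (c : ℂ) (x : ℝ) :
    ‖(x : ℂ) ^ k * Complex.exp (-(π : ℂ) * x ^ 2 + c * x)‖
      = |x| ^ k * Real.exp (-π * x ^ 2 + c.re * x) := by
  rw [norm_mul, norm_pow, Complex.norm_exp,
    Complex.norm_real, Real.norm_eq_abs]
  congr 2
  simp [Complex.add_re, Complex.mul_re, ← Complex.ofReal_pow]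

lemma pow_cexp_bound (k : ℕ) (c : ℂ) (x : ℝ) :
    ‖(x : ℂ) ^ k * Complex.exp (-(π : ℂ) * x ^ 2 + c * x)‖
      ≤ (k.factorial : ℝ) * (Real.exp (-π * x ^ 2 + (c.re + 1) * x)
          + Real.exp (-π * x ^ 2 + (c.re - 1) * x)) := by
  rw [norm_pow_cexp]
  have h1 : |x| ^ k ≤ (k.factorial : ℝ) * Real.exp |x| := by
    have := Real.pow_div_factorial_le_exp |x| (abs_nonneg x) k
    have hk : (0:ℝ) < k.factorial := by positivity
    calc |x| ^ k = |x| ^ k / k.factorial * k.factorial := by field_simp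
    _ ≤ Real.exp |x| * k.factorial := by gcongr
    _ = _ := by ring
  calc |x| ^ k * Real.exp (-π * x ^ 2 + c.re * x)
      ≤ ((k.factorial : ℝ) * Real.exp |x|) * Real.exp (-π * x ^ 2 + c.re * x) := by
        gcongr
    _ = (k.factorial : ℝ) * Real.exp (-π * x ^ 2 + c.re * x + |x|) := by
        rw [mul_assoc, ← Real.exp_add, add_comm |x|]
    _ ≤ _ := by
        rcases le_or_gt 0 x with hx | hx
        · rw [_root_.abs_of_nonneg hx]
          have : -π * x ^ 2 + c.re * x + x = -π * x ^ 2 + (c.re + 1) * x := by ring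
          rw [this]
          nlinarith [Real.exp_pos (-π * x ^ 2 + (c.re - 1) * x), (by positivity : (0:ℝ) < (k.factorial:ℝ))]
        · rw [_root_.abs_of_neg hx]
          have : -π * x ^ 2 + c.re * x + -x = -π * x ^ 2 + (c.re - 1) * x := by ring
          rw [this]
          nlinarith [Real.exp_pos (-π * x ^ 2 + (c.re + 1) * x), (by positivity : (0:ℝ) < (k.factorial:ℝ))]

lemma integrable_exp_quad (s : ℝ) : Integrable fun x : ℝ => Real.exp (-π * x ^ 2 + s * x) := by
  have h := (integrable_cexp_quadratic (b := (π:ℂ)) (by simpa using Real.pi_pos) (s:ℂ) 0).norm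
  convert h using 2 with x
  rw [add_zero, Complex.norm_exp]
  congr 1
  simp [Complex.add_re, Complex.mul_re, ← Complex.ofReal_pow]

lemma integrable_pow_mul_cexp (k : ℕ) (c : ℂ) :
    Integrable fun x : ℝ => (x : ℂ) ^ k * Complex.exp (-(π : ℂ) * x ^ 2 + c * x) := by
  refine Integrable.mono' (g := fun x : ℝ => (k.factorial : ℝ) *
    (Real.exp (-π * x ^ 2 + (c.re + 1) * x) + Real.exp (-π * x ^ 2 + (c.re - 1) * x))) ?_ ?_ ?_
  · exact ((integrable_exp_quad _).add (integrable_exp_quad _)).const_mul _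
  · apply Continuous.aestronglyMeasurable; continuity
  · filter_upwards with x; exact pow_cexp_bound k c x

lemma key0 (c : ℂ) : ∫ x : ℝ, Complex.exp (-(π : ℂ) * x ^ 2 + c * x)
    = Complex.exp (c ^ 2 / (4 * π)) := by
  have hπ : (π : ℂ) ≠ 0 := by simpa using Real.pi_ne_zero
  have h := integral_cexp_quadratic (b := -(π : ℂ)) (by simpa using Real.pi_pos) c 0
  simp only [add_zero, neg_neg, zero_sub] at h
  rw [div_self hπ, one_cpow, one_mul] at h
  rw [h]
  congr 1
  have h4 : (4:ℂ) * -(π:ℂ) = -(4 * π) := by ring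
  rw [h4, div_neg, neg_neg]

lemma exp_quad_tendsto_top (s : ℝ) :
    Tendsto (fun x : ℝ => Real.exp (-π * x ^ 2 + s * x)) atTop (nhds 0) := by
  apply Real.tendsto_exp_atBot.comp
  apply tendsto_atBot_mono' atTop ?_ tendsto_neg_atTop_atBot
  filter_upwards [eventually_ge_atTop ((s + 1) / π), eventually_ge_atTop (0:ℝ)] with x h1 h2
  have hπ := Real.pi_pos
  have h3 : s + 1 ≤ π * x := by
    rw [div_le_iff₀ hπ] at h1; linarith [h1]
  nlinarith [mul_le_mul_of_nonneg_right h3 h2]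

lemma exp_quad_tendsto_bot (s : ℝ) :
    Tendsto (fun x : ℝ => Real.exp (-π * x ^ 2 + s * x)) atBot (nhds 0) := by
  have h := (exp_quad_tendsto_top (-s)).comp tendsto_neg_atBot_atTop
  convert h using 2 with x
  simp only [Function.comp_apply]
  ring_nf

lemma pow_cexp_tendsto_top (k : ℕ) (c : ℂ) :
    Tendsto (fun x : ℝ => (x : ℂ) ^ k * Complex.exp (-(π : ℂ) * x ^ 2 + c * x))
      atTop (nhds 0) := by
  apply squeeze_zero_norm (pow_cexp_bound k c)
  rw [show (0:ℝ) = (k.factorial : ℝ) * (0 + 0) by ring]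
  exact (((exp_quad_tendsto_top _).add (exp_quad_tendsto_top _)).const_mul _)

lemma pow_cexp_tendsto_bot (k : ℕ) (c : ℂ) :
    Tendsto (fun x : ℝ => (x : ℂ) ^ k * Complex.exp (-(π : ℂ) * x ^ 2 + c * x))
      atBot (nhds 0) := by
  apply squeeze_zero_norm (pow_cexp_bound k c)
  rw [show (0:ℝ) = (k.factorial : ℝ) * (0 + 0) by ring]
  exact (((exp_quad_tendsto_bot _).add (exp_quad_tendsto_bot _)).const_mul _)

lemma integral_deriv_zero (f f' : ℝ → ℂ) (hd : ∀ x, HasDerivAt f (f' x) x)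
    (hi : Integrable f') (ht : Tendsto f atTop (nhds 0)) (hb : Tendsto f atBot (nhds 0)) :
    ∫ x : ℝ, f' x = 0 := by
  have h1 := integral_Ioi_of_hasDerivAt_of_tendsto' (a := 0) (fun x _ => hd x)
    hi.integrableOn ht
  have h2 := integral_Iic_of_hasDerivAt_of_tendsto' (a := 0) (fun x _ => hd x)
    hi.integrableOn hb
  rw [← intervalIntegral.integral_Iic_add_Ioi hi.integrableOn hi.integrableOn, h1, h2]
  ring

lemma hasDerivAt_cexp_quad (c : ℂ) (x : ℝ) :
    HasDerivAt (fun x : ℝ => Complex.exp (-(π : ℂ) * x ^ 2 + c * x))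
      ((-(2 * π) * x + c) * Complex.exp (-(π : ℂ) * x ^ 2 + c * x)) x := by
  have h1 : HasDerivAt (fun z : ℂ => Complex.exp (-(π : ℂ) * z ^ 2 + c * z))
      ((-(2 * π) * x + c) * Complex.exp (-(π : ℂ) * (x:ℂ) ^ 2 + c * x)) (x : ℂ) := by
    have h2 : HasDerivAt (fun z : ℂ => -(π : ℂ) * z ^ 2 + c * z)
        (-(2 * π) * (x:ℂ) + c) (x : ℂ) := by
      have := ((hasDerivAt_pow 2 (x:ℂ)).const_mul (-(π:ℂ))).add
        ((hasDerivAt_id (x:ℂ)).const_mul c)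
      refine this.congr_deriv ?_
      simp; ring
    simpa [mul_comm] using h2.cexp
  exact h1.comp_ofReal

lemma key1 (c : ℂ) : ∫ x : ℝ, (x : ℂ) * Complex.exp (-(π : ℂ) * x ^ 2 + c * x)
    = c / (2 * π) * Complex.exp (c ^ 2 / (4 * π)) := by
  have hπ : (π : ℂ) ≠ 0 := by simpa using Real.pi_ne_zero
  have hi1 : Integrable fun x : ℝ => (x : ℂ) * Complex.exp (-(π : ℂ) * x ^ 2 + c * x) := by
    simpa using integrable_pow_mul_cexp 1 c
  have hi0 : Integrable fun x : ℝ => Complex.exp (-(π : ℂ) * x ^ 2 + c * x) := by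
    simpa using integrable_pow_mul_cexp 0 c
  have hi : Integrable (fun x : ℝ =>
      (-(2 * (π:ℂ)) * x + c) * Complex.exp (-(π : ℂ) * x ^ 2 + c * x)) := by
    have := (hi1.const_mul (-(2 * (π:ℂ)))).add (hi0.const_mul c)
    apply this.congr
    filter_upwards with x
    simp only [Pi.add_apply]
    ring_nf
  have h0 : ∫ x : ℝ, (-(2 * (π:ℂ)) * x + c) * Complex.exp (-(π : ℂ) * x ^ 2 + c * x) = 0 := by
    apply integral_deriv_zero _ _ (hasDerivAt_cexp_quad c) hi
    · simpa using pow_cexp_tendsto_top 0 c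
    · simpa using pow_cexp_tendsto_bot 0 c
  have hsplit : ∫ x : ℝ, (-(2 * (π:ℂ)) * x + c) * Complex.exp (-(π : ℂ) * x ^ 2 + c * x)
      = -(2 * (π:ℂ)) * (∫ x : ℝ, (x : ℂ) * Complex.exp (-(π : ℂ) * x ^ 2 + c * x))
        + c * Complex.exp (c ^ 2 / (4 * π)) := by
    rw [show (fun x : ℝ => (-(2 * (π:ℂ)) * x + c) * Complex.exp (-(π : ℂ) * x ^ 2 + c * x))
        = fun x : ℝ => -(2 * (π:ℂ)) * ((x:ℂ) * Complex.exp (-(π : ℂ) * x ^ 2 + c * x))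
          + c * Complex.exp (-(π : ℂ) * x ^ 2 + c * x) from funext fun x => by ring]
    rw [integral_add (hi1.const_mul _) (hi0.const_mul c), integral_const_mul,
      integral_const_mul, key0]
  rw [h0] at hsplit
  have h2π : (2 * (π:ℂ)) ≠ 0 := by simp [hπ]
  rw [div_mul_eq_mul_div, eq_div_iff h2π]
  linear_combination hsplit

lemma key2 : ∫ x : ℝ, (x : ℂ) ^ 2 * Complex.exp (-(π : ℂ) * x ^ 2)
    = 1 / (2 * π) := by
  have hπ : (π : ℂ) ≠ 0 := by simpa using Real.pi_ne_zero
  have hi2 : Integrable fun x : ℝ => (x : ℂ) ^ 2 * Complex.exp (-(π : ℂ) * x ^ 2) := by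
    have := integrable_pow_mul_cexp 2 0
    simpa using this
  have hi0 : Integrable fun x : ℝ => Complex.exp (-(π : ℂ) * x ^ 2) := by
    have := integrable_pow_mul_cexp 0 0
    simpa using this
  have hd : ∀ x : ℝ, HasDerivAt (fun x : ℝ => (x:ℂ) * Complex.exp (-(π : ℂ) * x ^ 2))
      (Complex.exp (-(π : ℂ) * x ^ 2) - 2 * π * ((x:ℂ)^2 * Complex.exp (-(π : ℂ) * x ^ 2))) x := by
    intro x
    have h1 : HasDerivAt (fun x : ℝ => (x:ℂ)) 1 x := by
      simpa using (hasDerivAt_id x).ofReal_comp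
    have h2 := hasDerivAt_cexp_quad 0 x
    simp only [zero_mul, add_zero] at h2
    have := h1.mul h2
    refine this.congr_deriv ?_
    push_cast
    ring
  have hi : Integrable (fun x : ℝ => Complex.exp (-(π : ℂ) * x ^ 2)
      - 2 * π * ((x:ℂ)^2 * Complex.exp (-(π : ℂ) * x ^ 2))) :=
    hi0.sub (hi2.const_mul _)
  have h0 : ∫ x : ℝ, (Complex.exp (-(π : ℂ) * x ^ 2)
      - 2 * π * ((x:ℂ)^2 * Complex.exp (-(π : ℂ) * x ^ 2))) = 0 := by
    apply integral_deriv_zero _ _ hd hi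
    · simpa using pow_cexp_tendsto_top 1 0
    · simpa using pow_cexp_tendsto_bot 1 0
  rw [integral_sub hi0 (hi2.const_mul _), integral_const_mul] at h0
  have hk0 : ∫ x : ℝ, Complex.exp (-(π : ℂ) * x ^ 2) = 1 := by
    have := key0 0
    simpa using this
  rw [hk0] at h0
  have h2π : (2 * (π:ℂ)) ≠ 0 := by simp [hπ]
  rw [eq_div_iff h2π]
  linear_combination -h0

lemma key0' : ∫ x : ℝ, Complex.exp (-(π : ℂ) * x ^ 2) = 1 := by
  have := key0 0
  simpa using this

lemma key1' : ∫ x : ℝ, (x : ℂ) * Complex.exp (-(π : ℂ) * x ^ 2) = 0 := by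
  have := key1 0
  simpa using this

lemma i0' : Integrable fun x : ℝ => Complex.exp (-(π : ℂ) * x ^ 2) := by
  have := integrable_pow_mul_cexp 0 0; simpa using this

lemma i1' : Integrable fun x : ℝ => (x:ℂ) * Complex.exp (-(π : ℂ) * x ^ 2) := by
  have := integrable_pow_mul_cexp 1 0; simpa using this

lemma i2' : Integrable fun x : ℝ => (x:ℂ)^2 * Complex.exp (-(π : ℂ) * x ^ 2) := by
  have := integrable_pow_mul_cexp 2 0; simpa using this

lemma integral_complex (F : ℂ → ℂ) : ∫ v : ℂ, F v = ∫ p : ℝ × ℝ, F (p.1 + p.2 * Complex.I) := by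
  rw [← (Complex.volume_preserving_equiv_real_prod.symm).integral_comp
      Complex.measurableEquivRealProd.symm.measurableEmbedding F]
  congr 1
  ext p
  rw [Complex.measurableEquivRealProd_symm_apply, Complex.mk_eq_add_mul_I]

lemma cProd (f g : ℝ → ℂ) (F : ℂ → ℂ)
    (h : ∀ p : ℝ × ℝ, F (p.1 + p.2 * Complex.I) = f p.1 * g p.2) :
    ∫ v : ℂ, F v = (∫ x : ℝ, f x) * (∫ y : ℝ, g y) := by
  rw [integral_complex, Measure.volume_eq_prod]
  simp_rw [h]
  exact integral_prod_mul f g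

lemma cProd2 (f1 g1 f2 g2 : ℝ → ℂ) (F : ℂ → ℂ) (hf1 : Integrable f1) (hg1 : Integrable g1)
    (hf2 : Integrable f2) (hg2 : Integrable g2)
    (h : ∀ p : ℝ × ℝ, F (p.1 + p.2 * Complex.I) = f1 p.1 * g1 p.2 + f2 p.1 * g2 p.2) :
    ∫ v : ℂ, F v = (∫ x : ℝ, f1 x) * (∫ y : ℝ, g1 y) + (∫ x : ℝ, f2 x) * (∫ y : ℝ, g2 y) := by
  rw [integral_complex, Measure.volume_eq_prod]
  simp_rw [h]
  rw [integral_add (hf1.mul_prod hg1) (hf2.mul_prod hg2), integral_prod_mul, integral_prod_mul]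

lemma nsq_cast (p : ℝ × ℝ) :
    ((Complex.normSq ((p.1:ℂ) + p.2 * Complex.I) : ℝ) : ℂ) = (p.1:ℂ)^2 + (p.2:ℂ)^2 := by
  rw [Complex.normSq_add_mul_I]
  push_cast
  ring

lemma conj_cast (p : ℝ × ℝ) :
    (starRingEnd ℂ) ((p.1:ℂ) + p.2 * Complex.I) = (p.1:ℂ) - p.2 * Complex.I := by
  simp [Complex.conj_ofReal]
  ring

lemma exp_sum_zero (a : ℂ) :
    Complex.exp (((π:ℂ) * a) ^ 2 / (4 * π)) * Complex.exp ((-Complex.I * π * a) ^ 2 / (4 * π)) = 1 := by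
  have hπ : (π : ℂ) ≠ 0 := by simpa using Real.pi_ne_zero
  rw [← Complex.exp_add]
  rw [show ((π:ℂ) * a) ^ 2 / (4 * π) + (-Complex.I * π * a) ^ 2 / (4 * π) = 0 by
    have hI := Complex.I_sq
    field_simp
    linear_combination (π:ℂ) * a^2 * hI]
  exact Complex.exp_zero

lemma Esplit (a : ℂ) (p : ℝ × ℝ) :
    Complex.exp (-(π:ℂ) * Complex.normSq ((p.1:ℂ) + p.2 * Complex.I)
        + π * a * (starRingEnd ℂ) ((p.1:ℂ) + p.2 * Complex.I))
      = Complex.exp (-(π:ℂ) * p.1 ^ 2 + ((π:ℂ) * a) * p.1)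
        * Complex.exp (-(π:ℂ) * p.2 ^ 2 + (-Complex.I * π * a) * p.2) := by
  rw [← Complex.exp_add]
  congr 1
  rw [nsq_cast, conj_cast]
  ring

lemma Esplit0 (p : ℝ × ℝ) :
    Complex.exp (-(π:ℂ) * Complex.normSq ((p.1:ℂ) + p.2 * Complex.I))
      = Complex.exp (-(π:ℂ) * p.1 ^ 2) * Complex.exp (-(π:ℂ) * p.2 ^ 2) := by
  rw [← Complex.exp_add]
  congr 1
  rw [nsq_cast]
  ring

lemma re_cast (p : ℝ × ℝ) : ((((p.1:ℂ) + p.2 * Complex.I).re : ℝ) : ℂ) = (p.1 : ℂ) := by simp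

lemma im_cast (p : ℝ × ℝ) : ((((p.1:ℂ) + p.2 * Complex.I).im : ℝ) : ℂ) = (p.2 : ℂ) := by simp

lemma cInt0 (a : ℂ) :
    ∫ v : ℂ, Complex.exp (-(π:ℂ) * Complex.normSq v + π * a * (starRingEnd ℂ) v) = 1 := by
  rw [cProd (fun x : ℝ => Complex.exp (-(π:ℂ) * x ^ 2 + ((π:ℂ) * a) * x))
    (fun y : ℝ => Complex.exp (-(π:ℂ) * y ^ 2 + (-Complex.I * π * a) * y)) _
    (fun p => Esplit a p)]
  rw [key0, key0]
  exact exp_sum_zero a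

lemma cIntRe (a : ℂ) :
    ∫ v : ℂ, Complex.exp (-(π:ℂ) * Complex.normSq v + π * a * (starRingEnd ℂ) v)
      * ((v.re : ℝ) : ℂ) = a / 2 := by
  have hπ : (π : ℂ) ≠ 0 := by simpa using Real.pi_ne_zero
  rw [cProd (fun x : ℝ => (x:ℂ) * Complex.exp (-(π:ℂ) * x ^ 2 + ((π:ℂ) * a) * x))
    (fun y : ℝ => Complex.exp (-(π:ℂ) * y ^ 2 + (-Complex.I * π * a) * y)) _
    (fun p => by rw [Esplit a p, re_cast]; ring)]
  rw [key1, key0, mul_assoc, exp_sum_zero a, mul_one]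
  field_simp

lemma cIntIm (a : ℂ) :
    ∫ v : ℂ, Complex.exp (-(π:ℂ) * Complex.normSq v + π * a * (starRingEnd ℂ) v)
      * ((v.im : ℝ) : ℂ) = -Complex.I * a / 2 := by
  have hπ : (π : ℂ) ≠ 0 := by simpa using Real.pi_ne_zero
  rw [cProd (fun x : ℝ => Complex.exp (-(π:ℂ) * x ^ 2 + ((π:ℂ) * a) * x))
    (fun y : ℝ => (y:ℂ) * Complex.exp (-(π:ℂ) * y ^ 2 + (-Complex.I * π * a) * y)) _
    (fun p => by rw [Esplit a p, im_cast]; ring)]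
  rw [key1, key0]
  rw [show Complex.exp (((π:ℂ)*a)^2/(4*π)) * (-Complex.I*π*a/(2*π)
        * Complex.exp ((-Complex.I*π*a)^2/(4*π)))
      = -Complex.I*π*a/(2*π) * (Complex.exp (((π:ℂ)*a)^2/(4*π))
        * Complex.exp ((-Complex.I*π*a)^2/(4*π))) from by ring]
  rw [exp_sum_zero a, mul_one]
  field_simp

lemma cMom1 : ∫ u : ℂ, Complex.exp (-(π:ℂ) * Complex.normSq u) * u = 0 := by
  rw [cProd2 (fun x : ℝ => (x:ℂ) * Complex.exp (-(π:ℂ) * x ^ 2))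
    (fun y : ℝ => Complex.exp (-(π:ℂ) * y ^ 2))
    (fun x : ℝ => Complex.exp (-(π:ℂ) * x ^ 2))
    (fun y : ℝ => Complex.I * ((y:ℂ) * Complex.exp (-(π:ℂ) * y ^ 2)))
    _ i1' i0' i0' (i1'.const_mul _)
    (fun p => by rw [Esplit0 p]; ring)]
  rw [key1', key0', integral_const_mul, key1']
  simp

lemma cMomRe : ∫ u : ℂ, Complex.exp (-(π:ℂ) * Complex.normSq u) * ((u.re : ℝ) : ℂ) * u
    = 1 / (2 * π) := by
  rw [cProd2 (fun x : ℝ => (x:ℂ)^2 * Complex.exp (-(π:ℂ) * x ^ 2))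
    (fun y : ℝ => Complex.exp (-(π:ℂ) * y ^ 2))
    (fun x : ℝ => (x:ℂ) * Complex.exp (-(π:ℂ) * x ^ 2))
    (fun y : ℝ => Complex.I * ((y:ℂ) * Complex.exp (-(π:ℂ) * y ^ 2)))
    _ i2' i0' i1' (i1'.const_mul _)
    (fun p => by rw [Esplit0 p, re_cast]; ring)]
  rw [key2, key0', key1', integral_const_mul, key1']
  simp

lemma cMomIm : ∫ u : ℂ, Complex.exp (-(π:ℂ) * Complex.normSq u) * ((u.im : ℝ) : ℂ) * u
    = Complex.I / (2 * π) := by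
  rw [cProd2 (fun x : ℝ => (x:ℂ) * Complex.exp (-(π:ℂ) * x ^ 2))
    (fun y : ℝ => (y:ℂ) * Complex.exp (-(π:ℂ) * y ^ 2))
    (fun x : ℝ => Complex.exp (-(π:ℂ) * x ^ 2))
    (fun y : ℝ => Complex.I * ((y:ℂ)^2 * Complex.exp (-(π:ℂ) * y ^ 2)))
    _ i1' i1' i0' (i2'.const_mul _)
    (fun p => by rw [Esplit0 p, im_cast]; ring)]
  rw [key1', key0', integral_const_mul, key2]
  simp
  ring

def mIdx {n : ℕ} (j : Fin (2 * n)) : Fin n := ⟨j.val / 2, by have := j.isLt; omega⟩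

def cfac {n : ℕ} (j : Fin (2 * n)) : ℂ := if j.val % 2 = 0 then 1/2 else -Complex.I/2

def mfac {n : ℕ} (i : Fin (2 * n)) : ℂ :=
  if i.val % 2 = 0 then 1/(2*(π:ℂ)) else Complex.I/(2*(π:ℂ))

lemma realCoordC_eq {n : ℕ} (j : Fin (2 * n)) (w : Fin n → ℂ) :
    realCoordC j w = if j.val % 2 = 0 then (((w (mIdx j)).re : ℝ) : ℂ)
      else (((w (mIdx j)).im : ℝ) : ℂ) := rfl

lemma cInt1 : ∫ v : ℂ, Complex.exp (-(π:ℂ) * Complex.normSq v) = 1 := by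
  have := cInt0 0
  simpa using this

lemma inner_step {n : ℕ} (w : Fin n → ℂ) (j : Fin (2 * n)) :
    ∫ w' : Fin n → ℂ, bergK w w' * realCoordC j w' * bergK w' 0
      = Complex.exp (-((π:ℂ)/2) * ∑ k, (Complex.normSq (w k) : ℂ)) * (cfac j * w (mIdx j)) := by
  have hpt : ∀ w' : Fin n → ℂ, bergK w w' * realCoordC j w' * bergK w' 0
      = Complex.exp (-((π:ℂ)/2) * ∑ k, (Complex.normSq (w k) : ℂ)) *
        ∏ k, (Complex.exp (-(π:ℂ) * Complex.normSq (w' k)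
              + π * (w k) * (starRingEnd ℂ) (w' k)) *
          (if k = mIdx j then (if j.val % 2 = 0 then (((w' k).re : ℝ) : ℂ)
            else (((w' k).im : ℝ) : ℂ)) else 1)) := by
    intro w'
    rw [Finset.prod_mul_distrib, Finset.prod_ite_eq' Finset.univ (mIdx j), if_pos (Finset.mem_univ _),
      ← Complex.exp_sum, realCoordC_eq]
    unfold bergK
    have hE : Complex.exp (-((π:ℂ)/2) * ∑ k, ((Complex.normSq (w k):ℂ) + (Complex.normSq (w' k):ℂ)
            - 2 * w k * (starRingEnd ℂ) (w' k)))
        * Complex.exp (-((π:ℂ)/2) * ∑ k, ((Complex.normSq (w' k):ℂ)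
            + (Complex.normSq ((0 : Fin n → ℂ) k):ℂ) - 2 * w' k * (starRingEnd ℂ) ((0 : Fin n → ℂ) k)))
        = Complex.exp (-((π:ℂ)/2) * ∑ k, (Complex.normSq (w k):ℂ))
          * Complex.exp (∑ k, (-(π:ℂ) * Complex.normSq (w' k)
              + π * w k * (starRingEnd ℂ) (w' k))) := by
      rw [← Complex.exp_add, ← Complex.exp_add]
      congr 1
      rw [Finset.mul_sum, Finset.mul_sum, Finset.mul_sum, ← Finset.sum_add_distrib,
        ← Finset.sum_add_distrib]
      apply Finset.sum_congr rfl
      intro k _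
      simp only [Pi.zero_apply, map_zero, Complex.ofReal_zero, mul_zero, sub_zero, add_zero]
      ring
    linear_combination (if j.val % 2 = 0 then (((w' (mIdx j)).re : ℝ) : ℂ)
      else (((w' (mIdx j)).im : ℝ) : ℂ)) * hE
  rw [integral_congr_ae (Filter.Eventually.of_forall hpt), integral_const_mul]
  congr 1
  rw [MeasureTheory.integral_fintype_prod_volume_eq_prod (ι := Fin n)
    (fun k v => Complex.exp (-(π:ℂ) * Complex.normSq v + π * (w k) * (starRingEnd ℂ) v) *
      (if k = mIdx j then (if j.val % 2 = 0 then ((v.re : ℝ) : ℂ) else ((v.im : ℝ) : ℂ)) else 1))]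
  rw [Finset.prod_eq_single (mIdx j) ?_ ?_]
  · simp only [if_pos rfl]
    by_cases hp : j.val % 2 = 0
    · simp only [if_pos hp, if_true]
      rw [cIntRe (w (mIdx j))]
      unfold cfac
      rw [if_pos hp]
      ring
    · simp only [if_neg hp, if_true]
      rw [cIntIm (w (mIdx j))]
      unfold cfac
      rw [if_neg hp]
      ring
  · intro k _ hk
    simp only [if_neg hk, mul_one]
    exact cInt0 (w k)
  · intro h
    exact absurd (Finset.mem_univ _) h

lemma outer_step {n : ℕ} (i j : Fin (2 * n)) :
    ∫ w : Fin n → ℂ, (bergK 0 w * realCoordC i w) *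
      (Complex.exp (-((π:ℂ)/2) * ∑ k, (Complex.normSq (w k) : ℂ)) * (cfac j * w (mIdx j)))
      = if mIdx i = mIdx j then cfac j * mfac i else 0 := by
  have hpt : ∀ w : Fin n → ℂ, (bergK 0 w * realCoordC i w) *
      (Complex.exp (-((π:ℂ)/2) * ∑ k, (Complex.normSq (w k) : ℂ)) * (cfac j * w (mIdx j)))
      = cfac j * ∏ k, (Complex.exp (-(π:ℂ) * Complex.normSq (w k)) *
          (if k = mIdx i then (if i.val % 2 = 0 then (((w k).re : ℝ) : ℂ)
            else (((w k).im : ℝ) : ℂ)) else 1) *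
          (if k = mIdx j then w k else 1)) := by
    intro w
    rw [Finset.prod_mul_distrib, Finset.prod_mul_distrib,
      Finset.prod_ite_eq' Finset.univ (mIdx i), Finset.prod_ite_eq' Finset.univ (mIdx j),
      if_pos (Finset.mem_univ _), if_pos (Finset.mem_univ _), ← Complex.exp_sum, realCoordC_eq]
    unfold bergK
    have hE : Complex.exp (-((π:ℂ)/2) * ∑ k, ((Complex.normSq ((0 : Fin n → ℂ) k):ℂ)
            + (Complex.normSq (w k):ℂ) - 2 * (0 : Fin n → ℂ) k * (starRingEnd ℂ) (w k)))
        * Complex.exp (-((π:ℂ)/2) * ∑ k, (Complex.normSq (w k):ℂ))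
        = Complex.exp (∑ k, (-(π:ℂ) * Complex.normSq (w k))) := by
      rw [← Complex.exp_add]
      congr 1
      rw [Finset.mul_sum, Finset.mul_sum, ← Finset.sum_add_distrib]
      apply Finset.sum_congr rfl
      intro k _
      simp only [Pi.zero_apply, map_zero, Complex.ofReal_zero, zero_mul, mul_zero, sub_zero,
        zero_add]
      ring
    linear_combination ((if i.val % 2 = 0 then (((w (mIdx i)).re : ℝ) : ℂ)
      else (((w (mIdx i)).im : ℝ) : ℂ)) * (cfac j * w (mIdx j))) * hE
  rw [integral_congr_ae (Filter.Eventually.of_forall hpt), integral_const_mul]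
  rw [MeasureTheory.integral_fintype_prod_volume_eq_prod (ι := Fin n)
    (fun k v => Complex.exp (-(π:ℂ) * Complex.normSq v) *
      (if k = mIdx i then (if i.val % 2 = 0 then ((v.re : ℝ) : ℂ) else ((v.im : ℝ) : ℂ)) else 1) *
      (if k = mIdx j then v else 1))]
  by_cases hij : mIdx i = mIdx j
  · rw [if_pos hij]
    rw [Finset.prod_eq_single (mIdx i) ?_ ?_]
    · congr 1
      simp only [if_pos rfl, if_pos hij]
      by_cases hp : i.val % 2 = 0
      · simp only [if_pos hp, if_true]
        rw [cMomRe]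
        unfold mfac
        rw [if_pos hp]
      · simp only [if_neg hp, if_true]
        rw [cMomIm]
        unfold mfac
        rw [if_neg hp]
    · intro k _ hk
      have hk2 : k ≠ mIdx j := by rw [← hij]; exact hk
      simp only [if_neg hk, if_neg hk2, mul_one]
      exact cInt1
    · intro h
      exact absurd (Finset.mem_univ _) h
  · rw [if_neg hij, Finset.prod_eq_zero (Finset.mem_univ (mIdx j)) ?_, mul_zero]
    have h1 : mIdx j ≠ mIdx i := Ne.symm hij
    simp only [if_neg h1, if_pos rfl, mul_one]
    exact cMom1

lemma double_int {n : ℕ} (i j : Fin (2 * n)) :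
    (∫ w : Fin n → ℂ, ∫ w' : Fin n → ℂ,
        bergK 0 w * realCoordC i w * bergK w w' * realCoordC j w' * bergK w' 0)
      = if mIdx i = mIdx j then cfac j * mfac i else 0 := by
  have h1 : ∀ w : Fin n → ℂ, (∫ w' : Fin n → ℂ,
      bergK 0 w * realCoordC i w * bergK w w' * realCoordC j w' * bergK w' 0)
      = (bergK 0 w * realCoordC i w) *
        (Complex.exp (-((π:ℂ)/2) * ∑ k, (Complex.normSq (w k) : ℂ)) * (cfac j * w (mIdx j))) := by
    intro w
    rw [show (fun w' : Fin n → ℂ =>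
        bergK 0 w * realCoordC i w * bergK w w' * realCoordC j w' * bergK w' 0)
        = fun w' : Fin n → ℂ => (bergK 0 w * realCoordC i w) *
          (bergK w w' * realCoordC j w' * bergK w' 0) from funext fun w' => by ring]
    rw [integral_const_mul, inner_step w j]
  rw [integral_congr_ae (Filter.Eventually.of_forall h1), outer_step i j]

def pairE (n : ℕ) : Fin n × Fin 2 ≃ Fin (2 * n) where
  toFun p := ⟨2 * p.1.val + p.2.val, by have h1 := p.1.isLt; have h2 := p.2.isLt; omega⟩
  invFun j := (⟨j.val / 2, by have := j.isLt; omega⟩, ⟨j.val % 2, by omega⟩)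
  left_inv p := by
    have h2 := p.2.isLt
    ext
    · simp
      omega
    · simp
      omega
  right_inv j := by
    apply Fin.ext
    simp
    omega

lemma pairE_val {n : ℕ} (k : Fin n) (r : Fin 2) :
    (pairE n (k, r)).val = 2 * k.val + r.val := rfl

lemma mIdx_pairE {n : ℕ} (k : Fin n) (r : Fin 2) : mIdx (pairE n (k, r)) = k := by
  apply Fin.ext
  show (2 * k.val + r.val) / 2 = k.val
  have := r.isLt
  omega

lemma mod_pairE {n : ℕ} (k : Fin n) (r : Fin 2) :
    (pairE n (k, r)).val % 2 = r.val := by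
  rw [pairE_val]
  have := r.isLt
  omega

lemma cfac_pairE {n : ℕ} (k : Fin n) (r : Fin 2) :
    cfac (pairE n (k, r)) = if r.val = 0 then (1:ℂ)/2 else -Complex.I/2 := by
  unfold cfac
  simp only [mod_pairE]

lemma mfac_pairE {n : ℕ} (k : Fin n) (r : Fin 2) :
    mfac (pairE n (k, r)) = if r.val = 0 then 1/(2*(π:ℂ)) else Complex.I/(2*(π:ℂ)) := by
  unfold mfac
  simp only [mod_pairE]

lemma coordDir_pairE {n : ℕ} (k : Fin n) (r : Fin 2) :
    coordDir (pairE n (k, r)) = Pi.single k (if r.val = 0 then 1 else Complex.I) := by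
  show (Pi.single (mIdx (pairE n (k, r)))
    (if (pairE n (k, r)).val % 2 = 0 then (1:ℂ) else Complex.I) : Fin n → ℂ) = _
  simp only [mIdx_pairE, mod_pairE]

lemma realPDeriv_pairE0 {n : ℕ} (f : (Fin n → ℂ) → ℂ) (k : Fin n) :
    realPDeriv (pairE n (k, 0)) f 0 = fderiv ℝ f 0 (Pi.single k 1) := by
  unfold realPDeriv
  rw [coordDir_pairE]
  norm_num

lemma realPDeriv_pairE1 {n : ℕ} (f : (Fin n → ℂ) → ℂ) (k : Fin n) :
    realPDeriv (pairE n (k, 1)) f 0 = fderiv ℝ f 0 (Pi.single k Complex.I) := by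
  unfold realPDeriv
  rw [coordDir_pairE]
  norm_num

/-- For smooth `f, g : ℝ^{2n} → ℂ`,
`Σ_{i,j} ∂f/∂Z_i(0) ∂g/∂Z_j(0) ∫∫ 𝒫(0,w) W_i 𝒫(w,w') W'_j 𝒫(w',0) dW dW'
  = (1/π) Σ_k ∂f/∂z̄_k(0) ∂g/∂z_k(0)`. -/
theorem bergK_double_linear_term {n : ℕ} (f g : (Fin n → ℂ) → ℂ)
    (hf : ContDiff ℝ (⊤ : ℕ∞) f) (hg : ContDiff ℝ (⊤ : ℕ∞) g) :
    (∑ i : Fin (2 * n), ∑ j : Fin (2 * n),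
      realPDeriv i f 0 * realPDeriv j g 0 *
        ∫ w : Fin n → ℂ, ∫ w' : Fin n → ℂ,
          bergK 0 w * realCoordC i w * bergK w w' * realCoordC j w' * bergK w' 0)
      = (1 / (Real.pi : ℂ)) * ∑ k, wirtingerDBar k f 0 * wirtingerD k g 0 := by
  have hπ : (π : ℂ) ≠ 0 := by simpa using Real.pi_ne_zero
  simp_rw [double_int]
  rw [← Equiv.sum_comp (pairE n)]
  simp_rw [← Equiv.sum_comp (pairE n)]
  simp_rw [Fintype.sum_prod_type, mIdx_pairE, cfac_pairE, mfac_pairE, mul_ite, mul_zero,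
    Finset.sum_ite_irrel, Finset.sum_const_zero, Finset.sum_ite_eq, Finset.mem_univ, if_true,
    Fin.sum_univ_two]
  rw [Finset.mul_sum]
  refine Finset.sum_congr rfl fun k _ => ?_
  simp only [realPDeriv_pairE0, realPDeriv_pairE1, Fin.val_zero, Fin.val_one, if_true,
    one_ne_zero, if_false]
  simp only [wirtingerDBar, wirtingerD]
  field_simp
  linear_combination (0:ℂ) * Complex.I_sq
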